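/- With notation as above, the $\mathbb{Z}$-linear map sending $\alpha^{ij} - \alpha^{i,j+1} \mapsto \beta^{ji} - \beta^{j,i+1}$ (for $1 \le i \le n-1$, $1 \le j \le l-1$) extends to an isometry of lattices $N_n^l \to \widetilde{N}_l^n$; in particular, for all admissible indices, $(\alpha^{ip} - \alpha^{i,p+1},\, \alpha^{jq} - \alpha^{j,q+1}) = (\beta^{pi} - \beta^{p,i+1},\, \beta^{qj} - \beta^{q,j+1})$. -/

import Mathlib

/-!
The generators `γ i p = α i p - α i (p+1)` have Gram matrix `C_{n-1} ⊗ C_{l-1}`, and the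
`γ' p i` have Gram matrix `C_{l-1} ⊗ C_{n-1}`: the two agree once the index pairs are swapped.
The type `A` Cartan matrix is nondegenerate (a kernel vector, padded by zeros at both ends,
is an arithmetic progression vanishing at both ends), hence so are both Gram matrices. So
both families are bases of their spans, and the basis map swapping the indices is an isometry.
-/

/-- The Cartan matrix of type `A_m`. -/
def cartanA (m : ℕ) : Matrix (Fin m) (Fin m) ℤ :=
  Matrix.of fun i j =>
    if i = j then 2 else if i.val + 1 = j.val ∨ j.val + 1 = i.val then -1 else 0

open Matrix
open scoped Kronecker

open Finset in
theorem cartanA_mulVec_apply {m : ℕ} (u : ℕ → ℤ) (hu : ∀ k, m ≤ k → u k = 0)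
    (i : Fin m) :
    (cartanA m *ᵥ fun j => u j) i =
      2 * u i - u (i + 1) - if 0 < (i : ℕ) then u (i - 1) else 0 := by
  have hterm : ∀ j : ℕ,
      (if (i : ℕ) = j then 2 else if (i : ℕ) + 1 = j ∨ j + 1 = i then -1 else 0) * u j =
        (if (i : ℕ) = j then 2 * u i else 0) - (if (i : ℕ) + 1 = j then u (i + 1) else 0) -
          if 0 < (i : ℕ) then (if (i : ℕ) - 1 = j then u (i - 1) else 0) else 0 := by
    intro j
    split_ifs <;> first | omega | (subst_vars; ring)
  simp only [mulVec, dotProduct, cartanA, of_apply, Fin.ext_iff]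
  rw [Fin.sum_univ_eq_sum_range (fun j => (if (i : ℕ) = j then 2 else
    if (i : ℕ) + 1 = j ∨ j + 1 = i then -1 else 0) * u j), sum_congr rfl fun j _ => hterm j]
  simp only [sum_sub_distrib, sum_ite_eq, sum_ite_irrel, sum_const_zero, mem_range, i.isLt,
    if_true]
  rw [if_pos (show (i : ℕ) - 1 < m by omega),
    ite_eq_left_iff.mpr fun h => (hu _ (by omega)).symm]

theorem eq_zero_of_cartanA_mulVec_eq_zero {m : ℕ} {v : Fin m → ℤ}
    (hv : cartanA m *ᵥ v = 0) : v = 0 := by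
  set u : ℕ → ℤ := fun k => if h : k < m then v ⟨k, h⟩ else 0
  have hu : ∀ k, m ≤ k → u k = 0 := fun k hk => dif_neg (by omega)
  have hvu : v = fun j : Fin m => u j := funext fun j => by simp [u]
  have hrow : ∀ k < m, 2 * u k = u (k + 1) + if 0 < k then u (k - 1) else 0 := by
    intro k hk
    have := cartanA_mulVec_apply u hu ⟨k, hk⟩
    rw [← hvu, hv] at this
    simp only [Pi.zero_apply] at this
    linarith
  have harith : ∀ k ≤ m, u k = (k + 1) * u 0 := by
    refine Nat.twoStepInduction (by simp) (fun h1 => ?_) (fun k ih0 ih1 hk => ?_)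
    · have := hrow 0 h1
      simp only [lt_irrefl, if_false] at this
      push_cast; linarith
    · have := hrow (k + 1) (by omega)
      simp only [Nat.succ_pos, if_true, Nat.add_sub_cancel] at this
      have h0 := ih0 (by omega)
      have h1 := ih1 (by omega)
      push_cast at h0 h1 ⊢
      linarith
  have hu0 : u 0 = 0 := by
    have hm := harith m le_rfl
    rw [hu m le_rfl] at hm
    exact (mul_eq_zero.mp hm.symm).resolve_left (by positivity)
  ext j
  simp [hvu, harith j j.isLt.le, hu0]

theorem det_cartanA_ne_zero (m : ℕ) : (cartanA m).det ≠ 0 := fun h =>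
  let ⟨_, hv0, hv⟩ := Matrix.exists_mulVec_eq_zero_iff.mpr h
  hv0 (eq_zero_of_cartanA_mulVec_eq_zero hv)

theorem LinearMap.BilinForm.linearIndependent_of_det_gram_ne_zero {ι R M : Type*} [Fintype ι]
    [DecidableEq ι] [CommRing R] [IsDomain R] [AddCommGroup M] [Module R M]
    (B : LinearMap.BilinForm R M) {v : ι → M} {G : Matrix ι ι R} (hG : G.det ≠ 0)
    (hv : ∀ i j, B (v i) (v j) = G i j) : LinearIndependent R v := by
  rw [Fintype.linearIndependent_iff]
  intro c hc
  refine congrFun (Matrix.eq_zero_of_vecMul_eq_zero hG (funext fun j => ?_))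
  have := congrArg (B · (v j)) hc
  simpa [vecMul, dotProduct, hv] using this

theorem LinearMap.BilinForm.apply_sub_succ_sub_succ {ι M : Type*} {b : ℕ} [AddCommGroup M]
    [Module ℤ M] (B : LinearMap.BilinForm ℤ M) (G : Matrix ι ι ℤ) (α : ι → Fin b → M)
    (hα : ∀ i p j q, B (α i j) (α p q) = if j = q then G i p else 0)
    (i p : ι) (j q : Fin (b - 1)) :
    B (α i ⟨j, by omega⟩ - α i ⟨j + 1, by omega⟩)
        (α p ⟨q, by omega⟩ - α p ⟨q + 1, by omega⟩) =
      G i p * cartanA (b - 1) j q := by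
  simp only [map_sub, LinearMap.sub_apply, hα, cartanA, of_apply, Fin.ext_iff]
  split_ifs <;> omega

open Submodule in
theorem LinearMap.BilinForm.exists_isometry_span {ι κ R M M' : Type*} [CommRing R]
    [AddCommGroup M] [Module R M] [AddCommGroup M'] [Module R M'] (B : LinearMap.BilinForm R M)
    (B' : LinearMap.BilinForm R M') {v : ι → M} {w : κ → M'} (hv : LinearIndependent R v)
    (hw : LinearIndependent R w) (e : ι ≃ κ)
    (hB : ∀ i j, B' (w (e i)) (w (e j)) = B (v i) (v j)) :
    ∃ f : span R (Set.range v) ≃ₗ[R] span R (Set.range w),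
      (∀ x y, B' (f x) (f y) = B x y) ∧
        ∀ i, (f ⟨v i, subset_span ⟨i, rfl⟩⟩ : M') = w (e i) := by
  let f := (Module.Basis.span hv).equiv (Module.Basis.span hw) e
  have hf (i : ι) : (f ⟨v i, subset_span ⟨i, rfl⟩⟩ : M') = w (e i) := by
    rw [← Module.Basis.span_apply hv, Module.Basis.equiv_apply, Module.Basis.span_apply]
  have hiso : B'.compl₁₂ ((span R (Set.range w)).subtype ∘ₗ f)
      ((span R (Set.range w)).subtype ∘ₗ f) =
      B.compl₁₂ (span R (Set.range v)).subtype (span R (Set.range v)).subtype :=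
    LinearMap.ext_basis (Module.Basis.span hv) (Module.Basis.span hv) fun i j => by
      simp [Module.Basis.span_apply, hf, hB]
  exact ⟨f, fun x y => congr($hiso x y), hf⟩

open LinearMap.BilinForm in
/-- The map `α^{ij} - α^{i,j+1} ↦ β^{ji} - β^{j,i+1}` extends to an isometry of
lattices `N_n^l → Ñ_l^n`; in particular
`(α^{ip} - α^{i,p+1}, α^{jq} - α^{j,q+1}) = (β^{pi} - β^{p,i+1}, β^{qj} - β^{q,j+1})`. -/
theorem isometry_Nnl_Nln (n l : ℕ)
    (M M' : Type*) [AddCommGroup M] [Module ℤ M] [AddCommGroup M'] [Module ℤ M']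
    (B : LinearMap.BilinForm ℤ M) (B' : LinearMap.BilinForm ℤ M')
    (α : Fin (n - 1) → Fin l → M) (β : Fin (l - 1) → Fin n → M')
    (hα : ∀ (i p : Fin (n - 1)) (j q : Fin l),
      B (α i j) (α p q) = if j = q then cartanA (n - 1) i p else 0)
    (hβ : ∀ (i p : Fin (l - 1)) (j q : Fin n),
      B' (β i j) (β p q) = if j = q then cartanA (l - 1) i p else 0)
    -- the generators of `N_n^l` and of `Ñ_l^n`
    (γ : Fin (n - 1) → Fin (l - 1) → M) (γ' : Fin (l - 1) → Fin (n - 1) → M')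
    (hγ : ∀ (i : Fin (n - 1)) (j : Fin (l - 1)),
      γ i j = α i ⟨j.val, by have := j.isLt; omega⟩ - α i ⟨j.val + 1, by have := j.isLt; omega⟩)
    (hγ' : ∀ (j : Fin (l - 1)) (i : Fin (n - 1)),
      γ' j i = β j ⟨i.val, by have := i.isLt; omega⟩ - β j ⟨i.val + 1, by have := i.isLt; omega⟩) :
    (∀ (i j : Fin (n - 1)) (p q : Fin (l - 1)),
        B (γ i p) (γ j q) = B' (γ' p i) (γ' q j)) ∧
    ∃ f : Submodule.span ℤ (Set.range fun ij : Fin (n - 1) × Fin (l - 1) => γ ij.1 ij.2) ≃ₗ[ℤ]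
        Submodule.span ℤ (Set.range fun ji : Fin (l - 1) × Fin (n - 1) => γ' ji.1 ji.2),
      (∀ x y, B' (f x) (f y) = B (x : M) (y : M)) ∧
      (∀ (i : Fin (n - 1)) (j : Fin (l - 1)),
        (f ⟨γ i j, Submodule.subset_span ⟨(i, j), rfl⟩⟩ : M') = γ' j i) := by
  have hgram (ip jq : Fin (n - 1) × Fin (l - 1)) : B (γ ip.1 ip.2) (γ jq.1 jq.2) =
      (cartanA (n - 1) ⊗ₖ cartanA (l - 1)) ip jq := by
    rw [hγ, hγ]; exact apply_sub_succ_sub_succ B _ α hα ..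
  have hgram' (pi qj : Fin (l - 1) × Fin (n - 1)) : B' (γ' pi.1 pi.2) (γ' qj.1 qj.2) =
      (cartanA (l - 1) ⊗ₖ cartanA (n - 1)) pi qj := by
    rw [hγ', hγ']; exact apply_sub_succ_sub_succ B' _ β hβ ..
  have hdet (a b : ℕ) : (cartanA a ⊗ₖ cartanA b).det ≠ 0 := by
    simp [det_kronecker, det_cartanA_ne_zero]
  have hswap (i j : Fin (n - 1)) (p q : Fin (l - 1)) :
      B (γ i p) (γ j q) = B' (γ' p i) (γ' q j) := by
    rw [hgram (i, p) (j, q), hgram' (p, i) (q, j)]; exact mul_comm _ _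
  obtain ⟨f, hf, hgen⟩ := exists_isometry_span B B'
    (linearIndependent_of_det_gram_ne_zero B (hdet _ _) hgram)
    (linearIndependent_of_det_gram_ne_zero B' (hdet _ _) hgram') (Equiv.prodComm _ _)
    fun ip jq => (hswap ..).symm
  -- The goal puts `AddCommGroup.toIntModule`, not the submodule structure, on the spans,
  -- so `f` is transported through its underlying additive equivalence.
  exact ⟨hswap, (AddEquiv.mk' f.toEquiv (map_add f)).toIntLinearEquiv, hf,
    fun i j => hgen (i, j)⟩
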